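/- arXiv:2511.17626 — 7 statements merged into one kernel-verified Lean document; each statement's English description precedes it below -/
import Mathlib

section
/- Theorem 1, inequality (9): Suppose the full primal P has optimal value R* and strong duality holds for the full LP, i.e., there exists α* ∈ ℝ^p feasible for D with −bᵀα* = R*. Let I ⊆ {1,…,p} and let (μ₁, μ₂, ν) be an optimal solution of the primal subproblem P_I with optimal value R^k = −(τ−λ)ᵀμ₁ + (τ+λ)ᵀμ₂ + ν. Let ε̂₁ ≥ 0 be an upper bound on the largest violation of the full set of constraints, i.e., F(μ₁−μ₂) − ν·1 ⪯ b + ε̂₁·1. Then R* − ε̂₁ ≤ R^k ≤ R*. -/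
theorem mrc_constraint_generation_sandwich_general
    (p m : ℕ)
    (F : Fin p → Fin m → ℝ) (b : Fin p → ℝ) (τ lam : Fin m → ℝ)
    (Rstar Rk ε1 : ℝ)
    -- optimal solution of the full primal P with value Rstar
    (μ1s μ2s : Fin m → ℝ) (νs : ℝ)
    (h1s : ∀ j, 0 ≤ μ1s j) (h2s : ∀ j, 0 ≤ μ2s j)
    (hfeass : ∀ i, (∑ j, F i j * (μ1s j - μ2s j)) - νs ≤ b i)
    (hvals : -(∑ j, (τ j - lam j) * μ1s j) + (∑ j, (τ j + lam j) * μ2s j) + νs = Rstar)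
    (hmins : ∀ (μ1 μ2 : Fin m → ℝ) (ν : ℝ), (∀ j, 0 ≤ μ1 j) → (∀ j, 0 ≤ μ2 j) →
      (∀ i, (∑ j, F i j * (μ1 j - μ2 j)) - ν ≤ b i) →
      Rstar ≤ -(∑ j, (τ j - lam j) * μ1 j) + (∑ j, (τ j + lam j) * μ2 j) + ν)
    -- optimal solution of the subproblem P_I with value Rk
    (I : Finset (Fin p)) (μ1 μ2 : Fin m → ℝ) (ν : ℝ)
    (h1 : ∀ j, 0 ≤ μ1 j) (h2 : ∀ j, 0 ≤ μ2 j)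
    (hRk : -(∑ j, (τ j - lam j) * μ1 j) + (∑ j, (τ j + lam j) * μ2 j) + ν = Rk)
    (hImin : ∀ (μ1' μ2' : Fin m → ℝ) (ν' : ℝ), (∀ j, 0 ≤ μ1' j) → (∀ j, 0 ≤ μ2' j) →
      (∀ i ∈ I, (∑ j, F i j * (μ1' j - μ2' j)) - ν' ≤ b i) →
      Rk ≤ -(∑ j, (τ j - lam j) * μ1' j) + (∑ j, (τ j + lam j) * μ2' j) + ν')
    -- largest violation of the full constraint set is at most ε1
    (hviol : ∀ i, (∑ j, F i j * (μ1 j - μ2 j)) - ν ≤ b i + ε1) :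
    Rstar - ε1 ≤ Rk ∧ Rk ≤ Rstar := by
  -- Raising `ν` by `ε1` makes the subproblem optimum feasible for `P`, at cost `Rk + ε1`.
  have shifted_feasible : ∀ i, (∑ j, F i j * (μ1 j - μ2 j)) - (ν + ε1) ≤ b i :=
    fun i => by linarith [hviol i]
  have lower := hmins μ1 μ2 (ν + ε1) h1 h2 shifted_feasible
  -- `P_I` is a relaxation of `P`, so the optimum of `P` is feasible for `P_I`.
  have upper := hImin μ1s μ2s νs h1s h2s fun i _ => hfeass i
  constructor <;> linarith

/-- Theorem 1, inequality (9): if the full primal `P` has optimal value `Rstar`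
attained by `(μ1s, μ2s, νs)` and strong duality holds (dual feasible `αstar` with
value `Rstar`), and `(μ1, μ2, ν)` is an optimal solution of the subproblem `P_I`
with value `Rk` whose largest violation of the full constraint set is at most
`ε1 ≥ 0`, then `Rstar - ε1 ≤ Rk ≤ Rstar`. -/
theorem mrc_constraint_generation_sandwich
    (p m : ℕ) (hp : 0 < p) (hm : 0 < m)
    (F : Fin p → Fin m → ℝ) (b : Fin p → ℝ) (τ lam : Fin m → ℝ)
    (hlam : ∀ j, 0 ≤ lam j)
    (Rstar Rk ε1 : ℝ) (hε1 : 0 ≤ ε1)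
    -- optimal solution of the full primal P with value Rstar
    (μ1s μ2s : Fin m → ℝ) (νs : ℝ)
    (h1s : ∀ j, 0 ≤ μ1s j) (h2s : ∀ j, 0 ≤ μ2s j)
    (hfeass : ∀ i, (∑ j, F i j * (μ1s j - μ2s j)) - νs ≤ b i)
    (hvals : -(∑ j, (τ j - lam j) * μ1s j) + (∑ j, (τ j + lam j) * μ2s j) + νs = Rstar)
    (hmins : ∀ (μ1 μ2 : Fin m → ℝ) (ν : ℝ), (∀ j, 0 ≤ μ1 j) → (∀ j, 0 ≤ μ2 j) →
      (∀ i, (∑ j, F i j * (μ1 j - μ2 j)) - ν ≤ b i) →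
      Rstar ≤ -(∑ j, (τ j - lam j) * μ1 j) + (∑ j, (τ j + lam j) * μ2 j) + ν)
    -- strong duality: dual feasible point with value Rstar
    (αstar : Fin p → ℝ) (hαnn : ∀ i, 0 ≤ αstar i) (hαsum : ∑ i, αstar i = 1)
    (hαfeas : ∀ j, τ j - lam j ≤ ∑ i, αstar i * F i j ∧
      ∑ i, αstar i * F i j ≤ τ j + lam j)
    (hαval : -(∑ i, b i * αstar i) = Rstar)
    -- optimal solution of the subproblem P_I with value Rk
    (I : Finset (Fin p)) (μ1 μ2 : Fin m → ℝ) (ν : ℝ)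
    (h1 : ∀ j, 0 ≤ μ1 j) (h2 : ∀ j, 0 ≤ μ2 j)
    (hIfeas : ∀ i ∈ I, (∑ j, F i j * (μ1 j - μ2 j)) - ν ≤ b i)
    (hRk : -(∑ j, (τ j - lam j) * μ1 j) + (∑ j, (τ j + lam j) * μ2 j) + ν = Rk)
    (hImin : ∀ (μ1' μ2' : Fin m → ℝ) (ν' : ℝ), (∀ j, 0 ≤ μ1' j) → (∀ j, 0 ≤ μ2' j) →
      (∀ i ∈ I, (∑ j, F i j * (μ1' j - μ2' j)) - ν' ≤ b i) →
      Rk ≤ -(∑ j, (τ j - lam j) * μ1' j) + (∑ j, (τ j + lam j) * μ2' j) + ν')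
    -- largest violation of the full constraint set is at most ε1
    (hviol : ∀ i, (∑ j, F i j * (μ1 j - μ2 j)) - ν ≤ b i + ε1) :
    Rstar - ε1 ≤ Rk ∧ Rk ≤ Rstar :=
  mrc_constraint_generation_sandwich_general p m F b τ lam Rstar Rk ε1 μ1s μ2s νs h1s h2s hfeass
    hvals hmins I μ1 μ2 ν h1 h2 hRk hImin hviol
end

section
/- Theorem 2 (two-sided bound for the combined constraint- and column-generation algorithm): Suppose strong duality holds for the full LP, i.e., there exist μ* ∈ ℝ^m and ν* ∈ ℝ such that (μ₁*, μ₂*, ν*) with μ₁* = (μ*)₊ and μ₂* = (−μ*)₊ is an optimal solution of the full primal P with optimal value R*, and there exists α* feasible for the full dual D with −bᵀα* = R*. Suppose at iteration k there is a primal–dual pair of the subproblem with common value R^k: vectors μ₁^k, μ₂^k ⪰ 0 in ℝ^m, ν^k ∈ ℝ, and α^k ∈ ℝ^p with α^k ⪰ 0 and 1ᵀα^k = 1, such that R^k = −(τ−λ)ᵀμ₁^k + (τ+λ)ᵀμ₂^k + ν^k = −bᵀα^k. Let ε̂₁ ≥ 0 be such that F(μ₁^k−μ₂^k) − ν^k·1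 ⪯ b + ε̂₁·1 (largest primal constraint violation) and ε̂₂ ≥ 0 be such that |Fᵀα^k − τ| ⪯ λ + ε̂₂·1 (largest dual constraint violation). Then R* − ε̂₁ ≤ R^k ≤ R* + ε̂₂·‖μ*‖₁. -/
/-!
The lower bound holds because shifting `νᵏ` by the primal violation `ε̂₁` makes the subproblem
solution feasible for the full primal, whose optimal value is `R*`.  For the upper bound, averaging
the constraints `F μ* - ν* 1 ⪯ b` with the weights `αᵏ` gives `Rᵏ = -bᵀαᵏ ≤ -(Fᵀαᵏ)ᵀμ* + ν*`; each
coordinate `(Fᵀαᵏ)ⱼ` lies within `λⱼ + ε̂₂` of `τⱼ`, so `-(Fᵀαᵏ)ⱼ μ*ⱼ` exceeds the primal cost of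
`((μ*ⱼ)₊, (-μ*ⱼ)₊)` by at most `ε̂₂ |μ*ⱼ|`.
-/

open Finset

section MRC

variable {ι κ : Type*} [Fintype κ]

def mrcPrimalObjective (τ lam μ1 μ2 : κ → ℝ) (ν : ℝ) : ℝ :=
  -(∑ j, (τ j - lam j) * μ1 j) + (∑ j, (τ j + lam j) * μ2 j) + ν

theorem sub_le_mrcPrimalObjective_of_violation {F : ι → κ → ℝ} {b : ι → ℝ} {τ lam : κ → ℝ}
    {R ε : ℝ}
    (hmin : ∀ (μ1 μ2 : κ → ℝ) (ν : ℝ), (∀ j, 0 ≤ μ1 j) → (∀ j, 0 ≤ μ2 j) →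
      (∀ i, (∑ j, F i j * (μ1 j - μ2 j)) - ν ≤ b i) → R ≤ mrcPrimalObjective τ lam μ1 μ2 ν)
    {μ1 μ2 : κ → ℝ} {ν : ℝ} (h1 : ∀ j, 0 ≤ μ1 j) (h2 : ∀ j, 0 ≤ μ2 j)
    (hviol : ∀ i, (∑ j, F i j * (μ1 j - μ2 j)) - ν ≤ b i + ε) :
    R - ε ≤ mrcPrimalObjective τ lam μ1 μ2 ν := by
  have hshift := hmin μ1 μ2 (ν + ε) h1 h2 fun i => by linarith [hviol i]
  unfold mrcPrimalObjective at hshift ⊢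
  linarith

theorem sum_mul_sub_le_of_forall_le [Fintype ι] {F : ι → κ → ℝ} {b α : ι → ℝ} {μ : κ → ℝ} {ν : ℝ}
    (hα : ∀ i, 0 ≤ α i) (hαsum : ∑ i, α i = 1) (h : ∀ i, (∑ j, F i j * μ j) - ν ≤ b i) :
    (∑ j, (∑ i, α i * F i j) * μ j) - ν ≤ ∑ i, b i * α i :=
  calc (∑ j, (∑ i, α i * F i j) * μ j) - ν
      = ∑ i, α i * ((∑ j, F i j * μ j) - ν) := by
        simp_rw [mul_sub, sum_sub_distrib, ← sum_mul, hαsum, one_mul, mul_sum, sum_mul, mul_assoc]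
        rw [sum_comm]
    _ ≤ ∑ i, α i * b i := sum_le_sum fun i _ => mul_le_mul_of_nonneg_left (h i) (hα i)
    _ = ∑ i, b i * α i := by simp_rw [mul_comm]

theorem neg_mul_le_of_abs_sub_le {c t l ε : ℝ} (hc : |c - t| ≤ l + ε) (x : ℝ) :
    -(c * x) ≤ -((t - l) * max x 0) + (t + l) * max (-x) 0 + ε * |x| := by
  obtain ⟨hlow, hhigh⟩ := abs_le.mp hc
  rcases le_total 0 x with hx | hx
  · rw [max_eq_left hx, max_eq_right (neg_nonpos.mpr hx), abs_of_nonneg hx]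
    nlinarith
  · rw [max_eq_right hx, max_eq_left (neg_nonneg.mpr hx), abs_of_nonpos hx]
    nlinarith

theorem neg_sum_mul_le_mrcPrimalObjective_add [Fintype ι] {F : ι → κ → ℝ} {b α : ι → ℝ} {τ lam : κ → ℝ}
    {ε : ℝ} {μ : κ → ℝ} {ν : ℝ}
    (hfeas : ∀ i, (∑ j, F i j * (max (μ j) 0 - max (-μ j) 0)) - ν ≤ b i)
    (hα : ∀ i, 0 ≤ α i) (hαsum : ∑ i, α i = 1)
    (hviol : ∀ j, |(∑ i, α i * F i j) - τ j| ≤ lam j + ε) :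
    -(∑ i, b i * α i) ≤
      mrcPrimalObjective τ lam (fun j => max (μ j) 0) (fun j => max (-μ j) 0) ν
        + ε * ∑ j, |μ j| := by
  simp only [max_zero_sub_max_neg_zero_eq_self] at hfeas
  have hweak := sum_mul_sub_le_of_forall_le hα hαsum hfeas
  have hcoord : ∑ j, -((∑ i, α i * F i j) * μ j) ≤
      ∑ j, (-((τ j - lam j) * max (μ j) 0) + (τ j + lam j) * max (-μ j) 0 + ε * |μ j|) :=
    sum_le_sum fun j _ => neg_mul_le_of_abs_sub_le (hviol j) (μ j)
  simp only [sum_add_distrib, sum_neg_distrib, ← mul_sum] at hcoord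
  unfold mrcPrimalObjective
  linarith

end MRC

theorem mrc_combined_generation_sandwich_general
    (p m : ℕ)
    (F : Fin p → Fin m → ℝ) (b : Fin p → ℝ) (τ lam : Fin m → ℝ)
    (Rstar Rk ε1 ε2 : ℝ)
    -- optimal solution of the full primal P given by positive parts of μstar
    (μstar : Fin m → ℝ) (νstar : ℝ)
    (hfeass : ∀ i, (∑ j, F i j * (max (μstar j) 0 - max (-μstar j) 0)) - νstar ≤ b i)
    (hvals : -(∑ j, (τ j - lam j) * max (μstar j) 0)
      + (∑ j, (τ j + lam j) * max (-μstar j) 0) + νstar = Rstar)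
    (hmins : ∀ (μ1 μ2 : Fin m → ℝ) (ν : ℝ), (∀ j, 0 ≤ μ1 j) → (∀ j, 0 ≤ μ2 j) →
      (∀ i, (∑ j, F i j * (μ1 j - μ2 j)) - ν ≤ b i) →
      Rstar ≤ -(∑ j, (τ j - lam j) * μ1 j) + (∑ j, (τ j + lam j) * μ2 j) + ν)
    -- primal–dual subproblem pair at iteration k with common value Rk
    (μ1k μ2k : Fin m → ℝ) (νk : ℝ)
    (h1k : ∀ j, 0 ≤ μ1k j) (h2k : ∀ j, 0 ≤ μ2k j)
    (αk : Fin p → ℝ) (hαknn : ∀ i, 0 ≤ αk i) (hαksum : ∑ i, αk i = 1)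
    (hRkp : Rk = -(∑ j, (τ j - lam j) * μ1k j) + (∑ j, (τ j + lam j) * μ2k j) + νk)
    (hRkd : Rk = -(∑ i, b i * αk i))
    -- largest primal constraint violation is at most ε1
    (hviol1 : ∀ i, (∑ j, F i j * (μ1k j - μ2k j)) - νk ≤ b i + ε1)
    -- largest dual constraint violation is at most ε2
    (hviol2 : ∀ j, |(∑ i, αk i * F i j) - τ j| ≤ lam j + ε2) :
    Rstar - ε1 ≤ Rk ∧ Rk ≤ Rstar + ε2 * ∑ j, |μstar j| := by
  constructor
  · rw [hRkp]
    exact sub_le_mrcPrimalObjective_of_violation hmins h1k h2k hviol1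
  · rw [hRkd, ← hvals]
    exact neg_sum_mul_le_mrcPrimalObjective_add hfeass hαknn hαksum hviol2

/-- Theorem 2 (two-sided bound for the combined constraint- and column-generation
algorithm): under strong duality of the full LP with optimal value `Rstar`
attained by `μ1* = (μstar)₊`, `μ2* = (-μstar)₊`, `νstar`, and a primal–dual
subproblem pair with common value `Rk`, if the largest primal and dual constraint
violations are at most `ε1` and `ε2`, then
`Rstar - ε1 ≤ Rk ≤ Rstar + ε2 · ‖μstar‖₁`. -/
theorem mrc_combined_generation_sandwich
    (p m : ℕ) (hp : 0 < p) (hm : 0 < m)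
    (F : Fin p → Fin m → ℝ) (b : Fin p → ℝ) (τ lam : Fin m → ℝ)
    (hlam : ∀ j, 0 ≤ lam j)
    (Rstar Rk ε1 ε2 : ℝ) (hε1 : 0 ≤ ε1) (hε2 : 0 ≤ ε2)
    -- optimal solution of the full primal P given by positive parts of μstar
    (μstar : Fin m → ℝ) (νstar : ℝ)
    (hfeass : ∀ i, (∑ j, F i j * (max (μstar j) 0 - max (-μstar j) 0)) - νstar ≤ b i)
    (hvals : -(∑ j, (τ j - lam j) * max (μstar j) 0)
      + (∑ j, (τ j + lam j) * max (-μstar j) 0) + νstar = Rstar)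
    (hmins : ∀ (μ1 μ2 : Fin m → ℝ) (ν : ℝ), (∀ j, 0 ≤ μ1 j) → (∀ j, 0 ≤ μ2 j) →
      (∀ i, (∑ j, F i j * (μ1 j - μ2 j)) - ν ≤ b i) →
      Rstar ≤ -(∑ j, (τ j - lam j) * μ1 j) + (∑ j, (τ j + lam j) * μ2 j) + ν)
    -- strong duality: dual feasible point with value Rstar
    (αstar : Fin p → ℝ) (hαsnn : ∀ i, 0 ≤ αstar i) (hαssum : ∑ i, αstar i = 1)
    (hαsfeas : ∀ j, τ j - lam j ≤ ∑ i, αstar i * F i j ∧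
      ∑ i, αstar i * F i j ≤ τ j + lam j)
    (hαsval : -(∑ i, b i * αstar i) = Rstar)
    -- primal–dual subproblem pair at iteration k with common value Rk
    (μ1k μ2k : Fin m → ℝ) (νk : ℝ)
    (h1k : ∀ j, 0 ≤ μ1k j) (h2k : ∀ j, 0 ≤ μ2k j)
    (αk : Fin p → ℝ) (hαknn : ∀ i, 0 ≤ αk i) (hαksum : ∑ i, αk i = 1)
    (hRkp : Rk = -(∑ j, (τ j - lam j) * μ1k j) + (∑ j, (τ j + lam j) * μ2k j) + νk)
    (hRkd : Rk = -(∑ i, b i * αk i))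
    -- largest primal constraint violation is at most ε1
    (hviol1 : ∀ i, (∑ j, F i j * (μ1k j - μ2k j)) - νk ≤ b i + ε1)
    -- largest dual constraint violation is at most ε2
    (hviol2 : ∀ j, |(∑ i, αk i * F i j) - τ j| ≤ lam j + ε2) :
    Rstar - ε1 ≤ Rk ∧ Rk ≤ Rstar + ε2 * ∑ j, |μstar j| :=
  mrc_combined_generation_sandwich_general p m F b τ lam Rstar Rk ε1 ε2 μstar νstar hfeass hvals
    hmins μ1k μ2k νk h1k h2k αk hαknn hαksum hRkp hRkd hviol1 hviol2
end

section
/- Correctness of the greedy subset maximization (Algorithm 2): The maximum of ψ(C) = ((Σ_{y∈C} v(y)) − 1)/|C| over all nonempty subsets C ⊆ Y equals the maximum over prefix sets of the sorted values; that is, max over nonempty C ⊆ Y of ((Σ_{y∈C} v(y)) − 1)/|C| = max over k ∈ {1,…,N} of ((Σ_{i=1}^k a_i) − 1)/k. -/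
/-!
Exchange argument: if `#C = k + 1`, then `C` and the prefix `{a₁, …, a_{k+1}}` differ by sets of
equal size; passing from `C` to the prefix, every value removed is at most `a_{k+1}` and every
value added is at least `a_{k+1}`. So the prefix has the largest sum, hence the largest `ψ`, among
sets of its size, and every prefix is itself one of the sets `C`.
-/

open Finset

theorem Finset.sum_le_sum_of_card_eq_of_sdiff_le {ι M : Type*} [DecidableEq ι]
    [AddCommMonoid M] [PartialOrder M] [IsOrderedCancelAddMonoid M]
    {s t : Finset ι} {f : ι → M} (c : M) (hcard : #s = #t)
    (hs : ∀ i ∈ s \ t, f i ≤ c) (ht : ∀ j ∈ t \ s, c ≤ f j) :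
    ∑ i ∈ s, f i ≤ ∑ i ∈ t, f i := by
  rw [← sum_sdiff_le_sum_sdiff]
  calc ∑ i ∈ s \ t, f i ≤ #(s \ t) • c := sum_le_card_nsmul _ _ _ hs
    _ = #(t \ s) • c := by rw [card_sdiff_comm hcard]
    _ ≤ ∑ j ∈ t \ s, f j := card_nsmul_le_sum _ _ _ ht

theorem Antitone.sum_le_sum_Iic {ι M : Type*} [LinearOrder ι] [LocallyFiniteOrderBot ι]
    [AddCommMonoid M] [PartialOrder M] [IsOrderedCancelAddMonoid M]
    {a : ι → M} (ha : Antitone a) {s : Finset ι} {k : ι} (hcard : #s = #(Iic k)) :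
    ∑ i ∈ s, a i ≤ ∑ i ∈ Iic k, a i := by
  classical
  refine sum_le_sum_of_card_eq_of_sdiff_le (a k) hcard (fun i hi => ?_) (fun j hj => ?_)
  · rw [mem_sdiff, mem_Iic, not_le] at hi
    exact ha hi.2.le
  · exact ha (mem_Iic.1 (mem_sdiff.1 hj).1)

theorem Fin.exists_card_Iic_eq {N : ℕ} {s : Finset (Fin N)} (hs : s.Nonempty) :
    ∃ k : Fin N, #(Iic k) = #s := by
  have hle : #s ≤ N := by simpa using card_le_univ s
  have hpos := hs.card_pos
  exact ⟨⟨#s - 1, by omega⟩, by rw [Fin.card_Iic, Fin.val_mk]; omega⟩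

theorem greedy_subset_maximization_correct_general
    (Y : Type*) (v : Y → ℝ)
    (N : ℕ) (e : Fin N ≃ Y)
    (a : Fin N → ℝ) (ha : ∀ i, a i = v (e i))
    (hsorted : ∀ i j : Fin N, i ≤ j → a j ≤ a i) :
    sSup {r : ℝ | ∃ C : Finset Y, C.Nonempty ∧
        r = ((∑ y ∈ C, v y) - 1) / (C.card : ℝ)} =
      sSup {r : ℝ | ∃ k : Fin N,
        r = ((∑ i ∈ Finset.Iic k, a i) - 1) / ((k : ℕ) + 1 : ℝ)} := by
  have sum_map_equiv : ∀ s : Finset (Fin N), ∑ y ∈ s.map e.toEmbedding, v y = ∑ i ∈ s, a i := by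
    simp [ha]
  refine csSup_eq_csSup_of_forall_exists_le ?_ ?_
  · rintro _ ⟨C, hC, rfl⟩
    obtain ⟨s, rfl⟩ : ∃ s : Finset (Fin N), s.map e.toEmbedding = C :=
      ⟨C.map e.symm.toEmbedding, by simp [map_map]⟩
    obtain ⟨k, hk⟩ := Fin.exists_card_Iic_eq (s := s) (map_nonempty.1 hC)
    refine ⟨_, ⟨k, rfl⟩, ?_⟩
    rw [sum_map_equiv, card_map, ← hk, Fin.card_Iic, Nat.cast_succ]
    gcongr (?_ - _) / _
    exact Antitone.sum_le_sum_Iic (fun i j hij => hsorted i j hij) hk.symm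
  · rintro _ ⟨k, rfl⟩
    refine ⟨_, ⟨(Iic k).map e.toEmbedding, by simp, rfl⟩, le_of_eq ?_⟩
    rw [sum_map_equiv, card_map, Fin.card_Iic, Nat.cast_succ]

/-- Correctness of the greedy subset maximization (Algorithm 2): the maximum of
`ψ(C) = ((∑_{y∈C} v y) - 1)/|C|` over nonempty subsets `C ⊆ Y` equals the maximum
over prefix sets of the values sorted in nonincreasing order. -/
theorem greedy_subset_maximization_correct
    (Y : Type*) [Fintype Y] [Nonempty Y] (v : Y → ℝ)
    (N : ℕ) (e : Fin N ≃ Y)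
    (a : Fin N → ℝ) (ha : ∀ i, a i = v (e i))
    (hsorted : ∀ i j : Fin N, i ≤ j → a j ≤ a i) :
    sSup {r : ℝ | ∃ C : Finset Y, C.Nonempty ∧
        r = ((∑ y ∈ C, v y) - 1) / (C.card : ℝ)} =
      sSup {r : ℝ | ∃ k : Fin N,
        r = ((∑ i ∈ Finset.Iic k, a i) - 1) / ((k : ℕ) + 1 : ℝ)} :=
  greedy_subset_maximization_correct_general Y v N e a ha hsorted
end

section
/- Unimodality of the prefix values and validity of the greedy stopping rule (Algorithm 2): Define ψ_k = ((Σ_{i=1}^k a_i) − 1)/k for 1 ≤ k ≤ N. Then (i) for each k < N, ψ_{k+1} ≥ ψ_k if and only if a_{k+1} ≥ ψ_k; and (ii) if ψ_{k+1} < ψ_k for some k < N, then ψ_{j+1} < ψ_j for every j with k ≤ j < N. Consequently, max over 1 ≤ k ≤ N of ψ_k is attained at the first index k* such that either k* = N or ψ_{k*+1} < ψ_{k*}, so the greedy procedure that adds labels in nonincreasing order of a_i and stops as soon as adding the next label does not increase ψ attains the maximum of ψ_k over all k. -/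
/-!
Since `(k + 1) ψ_{k+1} = k ψ_k + a_{k+1}`, the value `ψ_{k+1}` is a weighted mean of `ψ_k` and
`a_{k+1}`: it rises exactly when `a_{k+1} ≥ ψ_k`, and after a strict drop it still lies strictly
above `a_{k+1} ≥ a_{k+2}`, so the next step drops as well. Hence `ψ` increases up to the first
drop and decreases after it.
-/

open Finset

section PrefixValue

variable {K : Type*} [Field K] [LinearOrder K] [IsStrictOrderedRing K]

/-- At `k = 0` the division by zero makes this `0`, so the recurrences below need `k ≠ 0`. -/
def prefixValue (a : ℕ → K) (k : ℕ) : K :=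
  ((∑ i ∈ Icc 1 k, a i) - 1) / k

variable {a : ℕ → K} {k : ℕ}

theorem succ_mul_prefixValue_succ (hk : k ≠ 0) :
    ((k : K) + 1) * prefixValue a (k + 1) = k * prefixValue a k + a (k + 1) := by
  have hk' : (k : K) ≠ 0 := Nat.cast_ne_zero.mpr hk
  rw [prefixValue, prefixValue, sum_Icc_succ_top (by omega), Nat.cast_succ]
  field_simp
  ring

theorem prefixValue_le_succ_iff (hk : k ≠ 0) :
    prefixValue a k ≤ prefixValue a (k + 1) ↔ prefixValue a k ≤ a (k + 1) := by
  have key : ((k : K) + 1) * (prefixValue a (k + 1) - prefixValue a k) =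
      a (k + 1) - prefixValue a k := by
    linear_combination succ_mul_prefixValue_succ (a := a) hk
  rw [← sub_nonneg, ← sub_nonneg (b := prefixValue a k), ← key]
  exact (mul_nonneg_iff_of_pos_left (by positivity)).symm

theorem prefixValue_succ_lt_iff (hk : k ≠ 0) :
    prefixValue a (k + 1) < prefixValue a k ↔ a (k + 1) < prefixValue a k := by
  simpa only [not_le] using (prefixValue_le_succ_iff (a := a) hk).not

theorem lt_prefixValue_succ_of_lt (hk : k ≠ 0) (h : a (k + 1) < prefixValue a k) :
    a (k + 1) < prefixValue a (k + 1) := by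
  have key : ((k : K) + 1) * (prefixValue a (k + 1) - a (k + 1)) =
      k * (prefixValue a k - a (k + 1)) := by
    linear_combination succ_mul_prefixValue_succ (a := a) hk
  have hpos : 0 < (k : K) * (prefixValue a k - a (k + 1)) :=
    mul_pos (by positivity) (sub_pos.mpr h)
  rw [← key] at hpos
  exact sub_pos.mp (pos_of_mul_pos_right hpos (by positivity))

theorem prefixValue_succ_succ_lt (hk : k ≠ 0) (ha : a (k + 2) ≤ a (k + 1))
    (h : prefixValue a (k + 1) < prefixValue a k) :
    prefixValue a (k + 2) < prefixValue a (k + 1) := by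
  have hdrop := lt_prefixValue_succ_of_lt hk ((prefixValue_succ_lt_iff hk).mp h)
  exact (prefixValue_succ_lt_iff k.succ_ne_zero).mpr (ha.trans_lt hdrop)

theorem prefixValue_succ_lt_of_succ_lt {N j : ℕ} (ha : AntitoneOn a (Set.Icc 1 N)) (hk : k ≠ 0)
    (h : prefixValue a (k + 1) < prefixValue a k) (hkj : k ≤ j) (hjN : j < N) :
    prefixValue a (j + 1) < prefixValue a j := by
  induction j, hkj using Nat.le_induction with
  | base => exact h
  | succ j hkj ih =>
    have ha_step : a (j + 2) ≤ a (j + 1) :=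
      ha ⟨by omega, by omega⟩ ⟨by omega, by omega⟩ (by omega)
    exact prefixValue_succ_succ_lt (by omega) ha_step (ih (by omega))

end PrefixValue

theorem apply_le_of_monotoneOn_of_antitoneOn {α β : Type*} [LinearOrder α] [Preorder β]
    {f : α → β} {l m N k : α} (hmono : MonotoneOn f (Set.Icc l m))
    (hanti : AntitoneOn f (Set.Icc m N)) (hk : k ∈ Set.Icc l N) (hlm : l ≤ m) (hmN : m ≤ N) :
    f k ≤ f m := by
  rcases le_total k m with hkm | hmk
  · exact hmono ⟨hk.1, hkm⟩ ⟨hlm, le_rfl⟩ hkm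
  · exact hanti ⟨le_rfl, hmN⟩ ⟨hmk, hk.2⟩ hmk

theorem greedy_prefix_unimodal_stopping_general
    (N : ℕ) (a : ℕ → ℝ)
    (hsorted : ∀ i j, 1 ≤ i → i ≤ j → j ≤ N → a j ≤ a i)
    (ψ : ℕ → ℝ)
    (hψ : ∀ k, ψ k = ((∑ i ∈ Finset.Icc 1 k, a i) - 1) / (k : ℝ)) :
    (∀ k, 1 ≤ k → k < N → (ψ k ≤ ψ (k + 1) ↔ ψ k ≤ a (k + 1))) ∧
    (∀ k, 1 ≤ k → k < N → ψ (k + 1) < ψ k →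
      ∀ j, k ≤ j → j < N → ψ (j + 1) < ψ j) ∧
    (∀ kstar, 1 ≤ kstar → kstar ≤ N →
      (kstar = N ∨ ψ (kstar + 1) < ψ kstar) →
      (∀ j, 1 ≤ j → j < kstar → ψ j ≤ ψ (j + 1)) →
      ∀ k, 1 ≤ k → k ≤ N → ψ k ≤ ψ kstar) := by
  have ha : AntitoneOn a (Set.Icc 1 N) := fun i hi j hj hij => hsorted i j hi.1 hij hj.2
  obtain rfl : ψ = prefixValue a := funext hψ
  refine ⟨fun k hk _ => prefixValue_le_succ_iff (by omega),
    fun k hk _ hdrop j hkj hjN => prefixValue_succ_lt_of_succ_lt ha (by omega) hdrop hkj hjN, ?_⟩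
  intro kstar hkstar hkstarN hstop hrise k hk hkN
  have hmono : MonotoneOn (prefixValue a) (Set.Icc 1 kstar) :=
    monotoneOn_of_le_add_one Set.ordConnected_Icc fun j _ hj hj' => hrise j hj.1 hj'.2
  have hanti : AntitoneOn (prefixValue a) (Set.Icc kstar N) := by
    refine antitoneOn_of_add_one_le Set.ordConnected_Icc fun j _ ⟨hkj, _⟩ ⟨_, hjN⟩ => ?_
    have hdrop : prefixValue a (kstar + 1) < prefixValue a kstar :=
      hstop.resolve_left (by omega)
    exact (prefixValue_succ_lt_of_succ_lt ha (by omega) hdrop hkj hjN).le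
  exact apply_le_of_monotoneOn_of_antitoneOn hmono hanti ⟨hk, hkN⟩ hkstar hkstarN

/-- Unimodality of the prefix values and validity of the greedy stopping rule
(Algorithm 2): with `ψ_k = ((∑_{i=1}^k a_i) - 1)/k` for a nonincreasing sequence
`a_1 ≥ ⋯ ≥ a_N`:
(i) for `k < N`, `ψ_{k+1} ≥ ψ_k ↔ a_{k+1} ≥ ψ_k`;
(ii) if `ψ_{k+1} < ψ_k` then `ψ_{j+1} < ψ_j` for all `k ≤ j < N`;
(iii) consequently the maximum of `ψ_k` over `1 ≤ k ≤ N` is attained at the first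
index `kstar` such that `kstar = N` or `ψ_{kstar+1} < ψ_{kstar}`. -/
theorem greedy_prefix_unimodal_stopping
    (N : ℕ) (hN : 1 ≤ N) (a : ℕ → ℝ)
    (hsorted : ∀ i j, 1 ≤ i → i ≤ j → j ≤ N → a j ≤ a i)
    (ψ : ℕ → ℝ)
    (hψ : ∀ k, ψ k = ((∑ i ∈ Finset.Icc 1 k, a i) - 1) / (k : ℝ)) :
    (∀ k, 1 ≤ k → k < N → (ψ k ≤ ψ (k + 1) ↔ ψ k ≤ a (k + 1))) ∧
    (∀ k, 1 ≤ k → k < N → ψ (k + 1) < ψ k →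
      ∀ j, k ≤ j → j < N → ψ (j + 1) < ψ j) ∧
    (∀ kstar, 1 ≤ kstar → kstar ≤ N →
      (kstar = N ∨ ψ (kstar + 1) < ψ kstar) →
      (∀ j, 1 ≤ j → j < kstar → ψ j ≤ ψ (j + 1)) →
      ∀ k, 1 ≤ k → k ≤ N → ψ k ≤ ψ kstar) :=
  greedy_prefix_unimodal_stopping_general N a hsorted ψ hψ
end

section
/- Equality of optimal values of the MRC convex problem and its LP formulation: The infimum over μ ∈ ℝ^m of 1 − τᵀμ + φ(μ) + λᵀ|μ|, where φ(μ) = max over i ∈ {1,…,n} and nonempty subsets C ⊆ Y of ((Σ_{y∈C} Φ(x_i,y)ᵀμ) − 1)/|C|, equals the optimal value of the linear program P: minimize −(τ−λ)ᵀμ₁ + (τ+λ)ᵀμ₂ + ν over μ₁, μ₂ ∈ ℝ^m with μ₁, μ₂ ⪰ 0 and ν ∈ ℝ, subject to F(μ₁−μ₂) − ν·1 ⪯ b. -/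
/-!
Splitting `μ = μ⁺ - μ⁻` makes `λᵀ|μ|` linear, and the epigraph variable `ν = φ(μ) + 1` turns the
maximum `φ(μ)` into the constraints `F(μ₁ - μ₂) - ν·1 ⪯ b`; so every value of the convex problem is
a value of `P`. Conversely a feasible `(μ₁, μ₂, ν)` costs at least the convex objective at
`μ₁ - μ₂`, because `φ(μ₁ - μ₂) ≤ ν - 1` and `|μ₁ - μ₂| ⪯ μ₁ + μ₂` with `λ ⪰ 0`. Two sets of reals
each of whose elements is bounded below by an element of the other have the same `sInf`, also
when they are unbounded below.
-/

open Matrix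

section MRC

variable {ι Y J : Type*} [Fintype J]

/-- The paper's `φ(μ)`, for the features `ψ i y = Φ(xᵢ, y)`. -/
noncomputable def mrcPhi (ψ : ι → Y → J → ℝ) (μ : J → ℝ) : ℝ :=
  sSup {s : ℝ | ∃ i, ∃ C : Finset Y, C.Nonempty ∧
    s = ((∑ y ∈ C, ψ i y ⬝ᵥ μ) - 1) / (C.card : ℝ)}

theorem mrcPhi_le_iff [Finite ι] [Nonempty ι] [Finite Y] [Nonempty Y]
    (ψ : ι → Y → J → ℝ) (μ : J → ℝ) (t : ℝ) :
    mrcPhi ψ μ ≤ t ↔ ∀ i, ∀ C : Finset Y, C.Nonempty →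
      ((∑ y ∈ C, ψ i y ⬝ᵥ μ) - 1) / (C.card : ℝ) ≤ t := by
  let g : ι × Finset Y → ℝ := fun p => ((∑ y ∈ p.2, ψ p.1 y ⬝ᵥ μ) - 1) / (p.2.card : ℝ)
  have hbdd : BddAbove (Set.range g) := (Set.finite_range g).bddAbove
  have hne : Set.Nonempty {s : ℝ | ∃ i, ∃ C : Finset Y, C.Nonempty ∧ s = g (i, C)} :=
    ⟨_, Classical.arbitrary ι, {Classical.arbitrary Y}, Finset.singleton_nonempty _, rfl⟩
  rw [mrcPhi, csSup_le_iff (hbdd.mono (by rintro _ ⟨i, C, -, rfl⟩; exact ⟨(i, C), rfl⟩)) hne]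
  constructor
  · exact fun h i C hC => h _ ⟨i, C, hC, rfl⟩
  · rintro h _ ⟨i, C, hC, rfl⟩
    exact h i C hC

/-- `φ(μ) ≤ ν - 1` is exactly the constraint `Fμ - ν·1 ⪯ b` of the linear program. -/
theorem mrcPhi_le_iff_lp_feasible [Finite ι] [Nonempty ι] [Finite Y] [Nonempty Y]
    (ψ : ι → Y → J → ℝ) (μ : J → ℝ) (ν : ℝ) :
    mrcPhi ψ μ ≤ ν - 1 ↔ ∀ i, ∀ C : Finset Y, C.Nonempty →
      1 / (C.card : ℝ) * (∑ y ∈ C, ψ i y ⬝ᵥ μ) - ν ≤ 1 / (C.card : ℝ) - 1 := by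
  rw [mrcPhi_le_iff]
  refine forall₃_congr fun i C _ => ?_
  rw [sub_div, one_div_mul_eq_div]
  constructor <;> intro h <;> linarith

end MRC

section LinearObjective

variable {J : Type*} [Fintype J]

theorem neg_sub_dotProduct_add_add_dotProduct (τ lam μ₁ μ₂ : J → ℝ) :
    -((τ - lam) ⬝ᵥ μ₁) + (τ + lam) ⬝ᵥ μ₂ = -(τ ⬝ᵥ (μ₁ - μ₂)) + lam ⬝ᵥ (μ₁ + μ₂) := by
  simp only [sub_dotProduct, add_dotProduct, dotProduct_sub, dotProduct_add]
  ring

theorem dotProduct_abs_sub_le_dotProduct_add {lam μ₁ μ₂ : J → ℝ} (hlam : 0 ≤ lam)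
    (h₁ : 0 ≤ μ₁) (h₂ : 0 ≤ μ₂) : lam ⬝ᵥ |μ₁ - μ₂| ≤ lam ⬝ᵥ (μ₁ + μ₂) :=
  dotProduct_le_dotProduct_of_nonneg_left
    (fun j => (abs_sub (μ₁ j) (μ₂ j)).trans_eq <| by
      rw [abs_of_nonneg (h₁ j), abs_of_nonneg (h₂ j)]; rfl)
    hlam

end LinearObjective

theorem mrc_sInf_eq_lp_sInf {ι Y J : Type*} [Finite ι] [Nonempty ι] [Finite Y] [Nonempty Y]
    [Fintype J] (ψ : ι → Y → J → ℝ) (τ lam : J → ℝ) (hlam : 0 ≤ lam) :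
    sInf {r : ℝ | ∃ μ : J → ℝ, r = 1 - τ ⬝ᵥ μ + mrcPhi ψ μ + lam ⬝ᵥ |μ|} =
      sInf {r : ℝ | ∃ μ₁ μ₂ : J → ℝ, ∃ ν : ℝ, 0 ≤ μ₁ ∧ 0 ≤ μ₂ ∧
        (∀ i, ∀ C : Finset Y, C.Nonempty →
          1 / (C.card : ℝ) * (∑ y ∈ C, ψ i y ⬝ᵥ (μ₁ - μ₂)) - ν ≤ 1 / (C.card : ℝ) - 1) ∧
        r = -((τ - lam) ⬝ᵥ μ₁) + (τ + lam) ⬝ᵥ μ₂ + ν} := by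
  apply csInf_eq_csInf_of_forall_exists_le
  · rintro _ ⟨μ, rfl⟩
    refine ⟨_, ⟨μ⁺, μ⁻, mrcPhi ψ μ + 1, posPart_nonneg μ, negPart_nonneg μ, ?_, rfl⟩, le_of_eq ?_⟩
    · rw [posPart_sub_negPart, ← mrcPhi_le_iff_lp_feasible, add_sub_cancel_right]
    · rw [neg_sub_dotProduct_add_add_dotProduct, posPart_sub_negPart, posPart_add_negPart]
      ring
  · rintro _ ⟨μ₁, μ₂, ν, h₁, h₂, hfeas, rfl⟩
    refine ⟨_, ⟨μ₁ - μ₂, rfl⟩, ?_⟩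
    have hphi := (mrcPhi_le_iff_lp_feasible ψ (μ₁ - μ₂) ν).2 hfeas
    have habs := dotProduct_abs_sub_le_dotProduct_add hlam h₁ h₂
    linarith [neg_sub_dotProduct_add_add_dotProduct τ lam μ₁ μ₂]

/-- Equality of optimal values of the MRC convex problem and its LP formulation:
the infimum over `μ` of `1 - τᵀμ + φ(μ) + λᵀ|μ|`, where `φ(μ)` is the maximum over
samples `i` and nonempty subsets `C ⊆ Y` of `((∑_{y∈C} Φ(x_i,y)ᵀμ) - 1)/|C|`,
equals the optimal value of the linear program `P`. -/
theorem mrc_lp_formulation_optimal_values_eq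
    (m n : ℕ) (hn : 0 < n)
    (Y : Type*) [Fintype Y] [Nonempty Y]
    (X : Type*) (Φ : X → Y → Fin m → ℝ) (x : Fin n → X)
    (τ lam : Fin m → ℝ) (hlam : ∀ j, 0 ≤ lam j) :
    sInf {r : ℝ | ∃ μ : Fin m → ℝ,
        r = 1 - (∑ j, τ j * μ j)
          + sSup {s : ℝ | ∃ i : Fin n, ∃ C : Finset Y, C.Nonempty ∧
              s = ((∑ y ∈ C, ∑ j, Φ (x i) y j * μ j) - 1) / (C.card : ℝ)}
          + ∑ j, lam j * |μ j|} =
      sInf {r : ℝ | ∃ μ1 μ2 : Fin m → ℝ, ∃ ν : ℝ,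
        (∀ j, 0 ≤ μ1 j) ∧ (∀ j, 0 ≤ μ2 j) ∧
        (∀ i : Fin n, ∀ C : Finset Y, C.Nonempty →
          ((1 : ℝ) / (C.card : ℝ)) * (∑ y ∈ C, ∑ j, Φ (x i) y j * (μ1 j - μ2 j)) - ν
            ≤ 1 / (C.card : ℝ) - 1) ∧
        r = -(∑ j, (τ j - lam j) * μ1 j) + (∑ j, (τ j + lam j) * μ2 j) + ν} := by
  have : Nonempty (Fin n) := ⟨⟨0, hn⟩⟩
  -- The coordinatewise sums and orders of the statement unfold `⬝ᵥ`, `|·|` and `≤` on `Fin m → ℝ`.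
  exact mrc_sInf_eq_lp_sInf (fun i => Φ (x i)) τ lam hlam
end

section
/- Solution recovery for the MRC LP formulation: If (μ₁*, μ₂*, ν*) is an optimal solution of the linear program P (minimize −(τ−λ)ᵀμ₁ + (τ+λ)ᵀμ₂ + ν over μ₁, μ₂ ⪰ 0 and ν ∈ ℝ subject to F(μ₁−μ₂) − ν·1 ⪯ b), then μ* = μ₁* − μ₂* is a minimizer over ℝ^m of the MRC objective 1 − τᵀμ + φ(μ) + λᵀ|μ|, where φ(μ) = max over i ∈ {1,…,n} and nonempty subsets C ⊆ Y of ((Σ_{y∈C} Φ(x_i,y)ᵀμ) − 1)/|C|. -/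
/-!
The LP is the epigraph reformulation of the MRC problem: writing `μ = μ₁ - μ₂` with
`μ₁, μ₂ ⪰ 0`, the constraints say exactly `φ(μ₁ - μ₂) ≤ ν - 1`, and since
`λᵀ|μ₁ - μ₂| ≤ λᵀ(μ₁ + μ₂)` the LP objective dominates the MRC objective at `μ₁ - μ₂`.
Conversely every `μ` yields the feasible point `(μ⁺, μ⁻, φ(μ) + 1)` whose LP objective equals
the MRC objective at `μ`. Hence MRC(μ₁* - μ₂*) ≤ LP(μ₁*, μ₂*, ν*) ≤ LP(μ⁺, μ⁻, φ(μ) + 1) = MRC(μ).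
-/

open Finset

namespace MRC

variable {ι I X Y : Type*} [Fintype ι]

def phiSet (Φ : X → Y → ι → ℝ) (x : I → X) (μ : ι → ℝ) : Set ℝ :=
  {s | ∃ i, ∃ C : Finset Y, C.Nonempty ∧
    s = ((∑ y ∈ C, ∑ j, Φ (x i) y j * μ j) - 1) / (C.card : ℝ)}

noncomputable def phi (Φ : X → Y → ι → ℝ) (x : I → X) (μ : ι → ℝ) : ℝ :=
  sSup (phiSet Φ x μ)

noncomputable def mrcObjective (Φ : X → Y → ι → ℝ) (x : I → X) (τ lam μ : ι → ℝ) : ℝ :=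
  1 - ∑ j, τ j * μ j + phi Φ x μ + ∑ j, lam j * |μ j|

/-- The constraint `F μ - ν 1 ⪯ b` of the LP. -/
def LPFeasible (Φ : X → Y → ι → ℝ) (x : I → X) (μ : ι → ℝ) (ν : ℝ) : Prop :=
  ∀ i C, C.Nonempty →
    (1 : ℝ) / (C.card : ℝ) * (∑ y ∈ C, ∑ j, Φ (x i) y j * μ j) - ν ≤ 1 / (C.card : ℝ) - 1

def lpObjective (τ lam μ₁ μ₂ : ι → ℝ) (ν : ℝ) : ℝ :=
  -(∑ j, (τ j - lam j) * μ₁ j) + ∑ j, (τ j + lam j) * μ₂ j + ν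

theorem phiSet_finite [Finite I] [Fintype Y] (Φ : X → Y → ι → ℝ) (x : I → X) (μ : ι → ℝ) :
    (phiSet Φ x μ).Finite := by
  refine (Set.finite_range fun p : I × Finset Y =>
    ((∑ y ∈ p.2, ∑ j, Φ (x p.1) y j * μ j) - 1) / (p.2.card : ℝ)).subset ?_
  rintro s ⟨i, C, -, rfl⟩
  exact ⟨(i, C), rfl⟩

theorem phiSet_nonempty [Nonempty I] [Fintype Y] [Nonempty Y] (Φ : X → Y → ι → ℝ) (x : I → X)
    (μ : ι → ℝ) : (phiSet Φ x μ).Nonempty :=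
  ⟨_, Classical.arbitrary I, univ, univ_nonempty, rfl⟩

theorem phi_le_iff [Finite I] [Nonempty I] [Fintype Y] [Nonempty Y] {Φ : X → Y → ι → ℝ} {x : I → X}
    {μ : ι → ℝ} {t : ℝ} :
    phi Φ x μ ≤ t ↔ ∀ i C, C.Nonempty →
      ((∑ y ∈ C, ∑ j, Φ (x i) y j * μ j) - 1) / (C.card : ℝ) ≤ t := by
  rw [phi, csSup_le_iff (phiSet_finite Φ x μ).bddAbove (phiSet_nonempty Φ x μ)]
  constructor
  · exact fun h i C hC => h _ ⟨i, C, hC, rfl⟩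
  · rintro h _ ⟨i, C, hC, rfl⟩
    exact h i C hC

theorem one_div_mul_sub_le_iff {c s ν : ℝ} (hc : 0 < c) :
    1 / c * s - ν ≤ 1 / c - 1 ↔ (s - 1) / c ≤ ν - 1 := by
  rw [div_le_iff₀ hc, ← sub_nonneg, ← mul_le_mul_iff_of_pos_left (one_div_pos.2 hc)]
  constructor <;> intro h <;> field_simp at h ⊢ <;> linarith

theorem lpFeasible_iff_phi_le [Finite I] [Nonempty I] [Fintype Y] [Nonempty Y] {Φ : X → Y → ι → ℝ}
    {x : I → X} {μ : ι → ℝ} {ν : ℝ} :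
    LPFeasible Φ x μ ν ↔ phi Φ x μ ≤ ν - 1 := by
  rw [phi_le_iff]
  refine forall₂_congr fun i C => imp_congr_right fun hC => ?_
  exact one_div_mul_sub_le_iff (by exact_mod_cast hC.card_pos)

theorem lpObjective_eq (τ lam μ₁ μ₂ : ι → ℝ) (ν : ℝ) :
    lpObjective τ lam μ₁ μ₂ ν = -(∑ j, τ j * (μ₁ j - μ₂ j)) + ∑ j, lam j * (μ₁ j + μ₂ j) + ν := by
  simp only [lpObjective, mul_sub, mul_add, sub_mul, add_mul, sum_sub_distrib, sum_add_distrib]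
  ring

theorem mrcObjective_sub_le_lpObjective {Φ : X → Y → ι → ℝ} {x : I → X} {τ lam μ₁ μ₂ : ι → ℝ}
    {ν : ℝ} (hlam : 0 ≤ lam) (h₁ : 0 ≤ μ₁) (h₂ : 0 ≤ μ₂) (hphi : phi Φ x (μ₁ - μ₂) ≤ ν - 1) :
    mrcObjective Φ x τ lam (μ₁ - μ₂) ≤ lpObjective τ lam μ₁ μ₂ ν := by
  have habs : ∑ j, lam j * |μ₁ j - μ₂ j| ≤ ∑ j, lam j * (μ₁ j + μ₂ j) := by
    refine sum_le_sum fun j _ => mul_le_mul_of_nonneg_left ?_ (hlam j)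
    simpa only [abs_of_nonneg (h₁ j), abs_of_nonneg (h₂ j)] using abs_sub (μ₁ j) (μ₂ j)
  rw [lpObjective_eq, mrcObjective]
  simp only [Pi.sub_apply] at hphi ⊢
  linarith

theorem lpObjective_posPart_negPart (Φ : X → Y → ι → ℝ) (x : I → X) (τ lam μ : ι → ℝ) :
    lpObjective τ lam μ⁺ μ⁻ (phi Φ x μ + 1) = mrcObjective Φ x τ lam μ := by
  simp only [lpObjective_eq, mrcObjective, Pi.posPart_apply, Pi.negPart_apply,
    posPart_sub_negPart, posPart_add_negPart]
  ring

end MRC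

open MRC in
/-- Solution recovery for the MRC LP formulation: if `(μ1s, μ2s, νs)` is an optimal
solution of the linear program `P`, then `μ* = μ1s - μ2s` minimizes the MRC
objective `1 - τᵀμ + φ(μ) + λᵀ|μ|` over `μ ∈ ℝ^m`, where `φ(μ)` is the maximum
over samples `i` and nonempty subsets `C ⊆ Y` of
`((∑_{y∈C} Φ(x_i,y)ᵀμ) - 1)/|C|`. -/
theorem mrc_lp_solution_recovery
    (m n : ℕ) (hn : 0 < n)
    (Y : Type*) [Fintype Y] [Nonempty Y]
    (X : Type*) (Φ : X → Y → Fin m → ℝ) (x : Fin n → X)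
    (τ lam : Fin m → ℝ) (hlam : ∀ j, 0 ≤ lam j)
    (μ1s μ2s : Fin m → ℝ) (νs : ℝ)
    (h1s : ∀ j, 0 ≤ μ1s j) (h2s : ∀ j, 0 ≤ μ2s j)
    (hfeas : ∀ i : Fin n, ∀ C : Finset Y, C.Nonempty →
      ((1 : ℝ) / (C.card : ℝ)) * (∑ y ∈ C, ∑ j, Φ (x i) y j * (μ1s j - μ2s j)) - νs
        ≤ 1 / (C.card : ℝ) - 1)
    (hopt : ∀ (μ1 μ2 : Fin m → ℝ) (ν : ℝ), (∀ j, 0 ≤ μ1 j) → (∀ j, 0 ≤ μ2 j) →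
      (∀ i : Fin n, ∀ C : Finset Y, C.Nonempty →
        ((1 : ℝ) / (C.card : ℝ)) * (∑ y ∈ C, ∑ j, Φ (x i) y j * (μ1 j - μ2 j)) - ν
          ≤ 1 / (C.card : ℝ) - 1) →
      -(∑ j, (τ j - lam j) * μ1s j) + (∑ j, (τ j + lam j) * μ2s j) + νs
        ≤ -(∑ j, (τ j - lam j) * μ1 j) + (∑ j, (τ j + lam j) * μ2 j) + ν) :
    ∀ μ : Fin m → ℝ,
      1 - (∑ j, τ j * (μ1s j - μ2s j))
        + sSup {s : ℝ | ∃ i : Fin n, ∃ C : Finset Y, C.Nonempty ∧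
            s = ((∑ y ∈ C, ∑ j, Φ (x i) y j * (μ1s j - μ2s j)) - 1) / (C.card : ℝ)}
        + ∑ j, lam j * |μ1s j - μ2s j|
      ≤ 1 - (∑ j, τ j * μ j)
        + sSup {s : ℝ | ∃ i : Fin n, ∃ C : Finset Y, C.Nonempty ∧
            s = ((∑ y ∈ C, ∑ j, Φ (x i) y j * μ j) - 1) / (C.card : ℝ)}
        + ∑ j, lam j * |μ j| := by
  intro μ
  have : Nonempty (Fin n) := ⟨⟨0, hn⟩⟩
  have hμ : LPFeasible Φ x (μ⁺ - μ⁻) (phi Φ x μ + 1) := by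
    rw [posPart_sub_negPart, lpFeasible_iff_phi_le, add_sub_cancel_right]
  calc mrcObjective Φ x τ lam (μ1s - μ2s)
      ≤ lpObjective τ lam μ1s μ2s νs :=
        mrcObjective_sub_le_lpObjective hlam h1s h2s (lpFeasible_iff_phi_le.1 hfeas)
    _ ≤ lpObjective τ lam μ⁺ μ⁻ (phi Φ x μ + 1) :=
        hopt _ _ _ (posPart_nonneg μ) (negPart_nonneg μ) hμ
    _ = mrcObjective Φ x τ lam μ := lpObjective_posPart_negPart Φ x τ lam μ
end

section
/- Boundedness of the initial LP built from cluster centers: Let τ ∈ ℝ^{dK} with blocks τ^1,…,τ^K ∈ ℝ^d, let λ ∈ ℝ^{dK} with λ ⪰ 0, let w ∈ ℝ^K with w_i > 0 and Σ_{i=1}^K w_i = 1, set ẑ_i = τ^i / w_i, and let F̂, b̂ be the MRC LP data built from the K samples ẑ₁,…,ẑ_K: F̂ has one row for each pair (i, C) with i ∈ {1,…,K} and C a nonempty subset of {1,…,K}, given by (1/|C|)·Σ_{y∈C} Φ(ẑ_i, y)ᵀ, and b̂_{(i,C)} = 1/|C| − 1, where Φ is the one-hot feature embedding. Then the vector α placing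 weight w_i on the row (i, {i}) for each i and zero elsewhere is feasible for the corresponding dual LP — α ⪰ 0, 1ᵀα = 1, and τ−λ ⪯ F̂ᵀα ⪯ τ+λ — and therefore, by weak duality, every feasible point (μ₁, μ₂, ν) of the primal LP with data (F̂, b̂) (μ₁, μ₂ ⪰ 0, F̂(μ₁−μ₂) − ν·1 ⪯ b̂) has objective value −(τ−λ)ᵀμ₁ + (τ+λ)ᵀμ₂ + ν ≥ −b̂ᵀα = 0; in particular the initial primal LP is bounded below. -/
/-!
Pairing the primal constraints with a dual-feasible `α` bounds the primal objective below
by `-bᵀα` (weak duality). The weights `w i` placed on the rows `(i, {i})` form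
such an `α`: since `ẑ_i = τ^i / w_i`, the combination `F̂ᵀα` equals `τ` exactly, and
`b̂_{(i,{i})} = 1/1 - 1 = 0`, so the bound is `0`.
-/

/-- The one-hot feature embedding `Φ(z, i) ∈ ℝ^{dK}`, represented in `K` blocks of
size `d`: the `i`-th block equals `z` and the remaining blocks are zero. -/
def oneHotEmbed (d K : ℕ) (z : Fin d → ℝ) (i : Fin K) : Fin K → Fin d → ℝ :=
  fun k j => if k = i then z j else 0

open Finset

section WeakDuality

variable {ι σ : Type*} [Fintype ι] [Fintype σ]

theorem mrc_weak_duality (F : ι → σ → ℝ) (b : ι → ℝ) (τ lam : σ → ℝ) (α : ι → ℝ)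
    (hα_nonneg : ∀ r, 0 ≤ α r) (hα_sum : ∑ r, α r = 1)
    (h_lower : ∀ s, τ s - lam s ≤ ∑ r, α r * F r s)
    (h_upper : ∀ s, ∑ r, α r * F r s ≤ τ s + lam s)
    (μ1 μ2 : σ → ℝ) (ν : ℝ) (hμ1 : ∀ s, 0 ≤ μ1 s) (hμ2 : ∀ s, 0 ≤ μ2 s)
    (h_primal : ∀ r, (∑ s, F r s * (μ1 s - μ2 s)) - ν ≤ b r) :
    -(∑ r, b r * α r) ≤ -(∑ s, (τ s - lam s) * μ1 s) + (∑ s, (τ s + lam s) * μ2 s) + ν := by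
  set g : σ → ℝ := fun s => ∑ r, α r * F r s
  have h_obj : -(∑ s, g s * (μ1 s - μ2 s)) ≤
      -(∑ s, (τ s - lam s) * μ1 s) + ∑ s, (τ s + lam s) * μ2 s := by
    rw [← sum_neg_distrib, ← sum_neg_distrib, ← sum_add_distrib]
    refine sum_le_sum fun s _ => ?_
    nlinarith [mul_le_mul_of_nonneg_right (h_lower s) (hμ1 s),
      mul_le_mul_of_nonneg_right (h_upper s) (hμ2 s)]
  have h_pair : ∑ s, g s * (μ1 s - μ2 s) = ∑ r, α r * ∑ s, F r s * (μ1 s - μ2 s) := by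
    simp only [g, sum_mul, mul_sum, mul_assoc]
    exact sum_comm
  have h_dual : ∑ r, α r * ∑ s, F r s * (μ1 s - μ2 s) ≤ ∑ r, b r * α r + ν :=
    calc ∑ r, α r * ∑ s, F r s * (μ1 s - μ2 s)
        ≤ ∑ r, α r * (b r + ν) :=
          sum_le_sum fun r _ => mul_le_mul_of_nonneg_left (by linarith [h_primal r]) (hα_nonneg r)
      _ = ∑ r, b r * α r + (∑ r, α r) * ν := by
          rw [sum_mul, ← sum_add_distrib]
          exact sum_congr rfl fun r _ => by ring
      _ = ∑ r, b r * α r + ν := by rw [hα_sum, one_mul]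
  linarith

end WeakDuality

section DiagonalWeights

variable {ι : Type*} [Fintype ι] [DecidableEq ι]

def singletonNonempty (i : ι) : {C : Finset ι // C.Nonempty} := ⟨{i}, singleton_nonempty i⟩

theorem sum_mul_eq_sum_singletonNonempty (w : ι → ℝ) (α : ι × {C : Finset ι // C.Nonempty} → ℝ)
    (hα : ∀ i C, α (i, C) = if C.1 = {i} then w i else 0)
    (g : ι × {C : Finset ι // C.Nonempty} → ℝ) :
    ∑ r, α r * g r = ∑ i, w i * g (i, singletonNonempty i) := by
  rw [Fintype.sum_prod_type]
  refine sum_congr rfl fun i _ => ?_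
  rw [Fintype.sum_eq_single (singletonNonempty i) fun C hC => ?_]
  · simp [hα, singletonNonempty]
  · have hC_ne : C.1 ≠ {i} := fun h => hC (Subtype.ext h)
    simp [hα, hC_ne]

end DiagonalWeights

theorem sum_mul_oneHotEmbed_self {d K : ℕ} (c : Fin K → ℝ) (z : Fin K → Fin d → ℝ)
    (k : Fin K) (j : Fin d) : ∑ i, c i * oneHotEmbed d K (z i) i k j = c k * z k j := by
  simp [oneHotEmbed]

theorem mrc_initial_lp_bounded_general
    (d K : ℕ)
    (τ lam : Fin K → Fin d → ℝ) (hlam : ∀ k j, 0 ≤ lam k j)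
    (w : Fin K → ℝ) (hw : ∀ i, 0 < w i) (hwsum : ∑ i, w i = 1)
    (zhat : Fin K → Fin d → ℝ) (hz : ∀ i j, zhat i j = τ i j / w i)
    (Fhat : Fin K × {C : Finset (Fin K) // C.Nonempty} → Fin K → Fin d → ℝ)
    (hF : ∀ i C k j, Fhat (i, C) k j
      = ((1 : ℝ) / (C.1.card : ℝ)) * ∑ y ∈ C.1, oneHotEmbed d K (zhat i) y k j)
    (bhat : Fin K × {C : Finset (Fin K) // C.Nonempty} → ℝ)
    (hb : ∀ i C, bhat (i, C) = 1 / (C.1.card : ℝ) - 1)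
    (α : Fin K × {C : Finset (Fin K) // C.Nonempty} → ℝ)
    (hα : ∀ i C, α (i, C) = if C.1 = {i} then w i else 0) :
    (∀ r, 0 ≤ α r) ∧
    (∑ r, α r = 1) ∧
    (∀ k j, τ k j - lam k j ≤ ∑ r, α r * Fhat r k j ∧
      ∑ r, α r * Fhat r k j ≤ τ k j + lam k j) ∧
    (-(∑ r, bhat r * α r) = 0) ∧
    (∀ (μ1 μ2 : Fin K → Fin d → ℝ) (ν : ℝ),
      (∀ k j, 0 ≤ μ1 k j) → (∀ k j, 0 ≤ μ2 k j) →
      (∀ r, (∑ k, ∑ j, Fhat r k j * (μ1 k j - μ2 k j)) - ν ≤ bhat r) →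
      0 ≤ -(∑ k, ∑ j, (τ k j - lam k j) * μ1 k j)
        + (∑ k, ∑ j, (τ k j + lam k j) * μ2 k j) + ν) := by
  have hα_nonneg : ∀ r, 0 ≤ α r := fun ⟨i, C⟩ => by
    rw [hα]; split_ifs
    exacts [(hw i).le, le_rfl]
  have hα_sum : ∑ r, α r = 1 := by
    simpa [hwsum] using sum_mul_eq_sum_singletonNonempty w α hα 1
  have hFα : ∀ k j, ∑ r, α r * Fhat r k j = τ k j := fun k j => by
    rw [sum_mul_eq_sum_singletonNonempty w α hα]
    simp only [hF, singletonNonempty, card_singleton, Nat.cast_one, div_one, one_mul,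
      sum_singleton, sum_mul_oneHotEmbed_self, hz]
    field_simp [(hw k).ne']
  have hbα : ∑ r, bhat r * α r = 0 := by
    simp_rw [mul_comm (bhat _), sum_mul_eq_sum_singletonNonempty w α hα, hb, singletonNonempty]
    simp
  have h_box : ∀ k j, τ k j - lam k j ≤ ∑ r, α r * Fhat r k j ∧
      ∑ r, α r * Fhat r k j ≤ τ k j + lam k j := fun k j => by
    rw [hFα]; constructor <;> linarith [hlam k j]
  refine ⟨hα_nonneg, hα_sum, h_box, by rw [hbα, neg_zero], fun μ1 μ2 ν hμ1 hμ2 h_primal => ?_⟩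
  have h_weak := mrc_weak_duality (σ := Fin K × Fin d) (fun r s => Fhat r s.1 s.2) bhat
    (fun s => τ s.1 s.2) (fun s => lam s.1 s.2) α hα_nonneg hα_sum (fun s => (h_box s.1 s.2).1)
    (fun s => (h_box s.1 s.2).2) (fun s => μ1 s.1 s.2) (fun s => μ2 s.1 s.2) ν
    (fun s => hμ1 s.1 s.2) (fun s => hμ2 s.1 s.2)
    (fun r => by simpa only [Fintype.sum_prod_type] using h_primal r)
  simpa only [Fintype.sum_prod_type, hbα, neg_zero] using h_weak

/-- Boundedness of the initial LP built from cluster centers: the vector `α`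
putting weight `w i` on the row `(i, {i})` is feasible for the dual of the LP with
data `(F̂, b̂)` built from the samples `ẑ_1, …, ẑ_K`, it has dual objective
`-b̂ᵀα = 0`, and hence by weak duality every feasible point of the initial primal
LP has nonnegative objective value; in particular the initial LP is bounded
below. -/
theorem mrc_initial_lp_bounded
    (d K : ℕ) (hd : 0 < d) (hK : 0 < K)
    (τ lam : Fin K → Fin d → ℝ) (hlam : ∀ k j, 0 ≤ lam k j)
    (w : Fin K → ℝ) (hw : ∀ i, 0 < w i) (hwsum : ∑ i, w i = 1)
    (zhat : Fin K → Fin d → ℝ) (hz : ∀ i j, zhat i j = τ i j / w i)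
    (Fhat : Fin K × {C : Finset (Fin K) // C.Nonempty} → Fin K → Fin d → ℝ)
    (hF : ∀ i C k j, Fhat (i, C) k j
      = ((1 : ℝ) / (C.1.card : ℝ)) * ∑ y ∈ C.1, oneHotEmbed d K (zhat i) y k j)
    (bhat : Fin K × {C : Finset (Fin K) // C.Nonempty} → ℝ)
    (hb : ∀ i C, bhat (i, C) = 1 / (C.1.card : ℝ) - 1)
    (α : Fin K × {C : Finset (Fin K) // C.Nonempty} → ℝ)
    (hα : ∀ i C, α (i, C) = if C.1 = {i} then w i else 0) :
    (∀ r, 0 ≤ α r) ∧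
    (∑ r, α r = 1) ∧
    (∀ k j, τ k j - lam k j ≤ ∑ r, α r * Fhat r k j ∧
      ∑ r, α r * Fhat r k j ≤ τ k j + lam k j) ∧
    (-(∑ r, bhat r * α r) = 0) ∧
    (∀ (μ1 μ2 : Fin K → Fin d → ℝ) (ν : ℝ),
      (∀ k j, 0 ≤ μ1 k j) → (∀ k j, 0 ≤ μ2 k j) →
      (∀ r, (∑ k, ∑ j, Fhat r k j * (μ1 k j - μ2 k j)) - ν ≤ bhat r) →
      0 ≤ -(∑ k, ∑ j, (τ k j - lam k j) * μ1 k j)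
        + (∑ k, ∑ j, (τ k j + lam k j) * μ2 k j) + ν) :=
  mrc_initial_lp_bounded_general d K τ lam hlam w hw hwsum zhat hz Fhat hF bhat hb α hα
end
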